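/- arXiv:math/0507118 — 2 statements merged into one kernel-verified Lean document; each statement's English description precedes it below -/
import Mathlib

section
/- The groups PSL(3,F2) and PSL(2,F7) are isomorphic. -/
/-!
`PSL(2, 7)` acts on the projective line `ℙ¹(𝔽₇)`, which has eight points. Identified suitably with
`𝔽₂³`, every element of `SL(2, 7)` acts by an affine map; since transvections generate `SL(2, 7)`,
this is a finite check. Taking linear parts gives a homomorphism `PSL(2, 7) → GL(3, 2)`. It is
nontrivial, hence injective because `PSL(2, 7)` is simple, and both groups have order `168`.
Finally `PSL(3, 2) = SL(3, 2) = GL(3, 2)` because `𝔽₂ˣ` is trivial.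
-/

open scoped MatrixGroups
open Matrix OnePoint

namespace AffineEquiv

variable {k V : Type*} [Ring k] [AddCommGroup V] [Module k V]

variable (k) in
def toPerm : (V ≃ᵃ[k] V) →* Equiv.Perm V where
  toFun e := e.toEquiv
  map_one' := rfl
  map_mul' _ _ := rfl

theorem toPerm_injective : Function.Injective (toPerm k (V := V)) :=
  toEquiv_injective

theorem linear_apply_eq_sub (e : V ≃ᵃ[k] V) (v : V) : e.linear v = e v - e 0 := by
  simpa using e.toAffineMap.linearMap_vsub v 0

theorem mem_range_toPerm_of_map_add {n : ℕ} [Module (ZMod n) V] (f : Equiv.Perm V)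
    (hf : ∀ u v, f (u + v) = f u + f v - f 0) : f ∈ (toPerm (ZMod n)).range := by
  let L : V →ₗ[ZMod n] V :=
    (AddMonoidHom.mk' (fun v ↦ f v - f 0) fun u v ↦ by rw [hf]; abel).toZModLinearMap n
  let φ : V →ᵃ[ZMod n] V := ⟨f, L, fun p v ↦ by simp [L, hf, add_comm, add_sub_assoc]⟩
  exact ⟨ofBijective (φ := φ) f.bijective, Equiv.ext fun _ ↦ rfl⟩

end AffineEquiv

section LinearPart

variable {G ι : Type*} [Group G] [Fintype ι] [DecidableEq ι] {n : ℕ}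
  (ρ : G →* Equiv.Perm (ι → ZMod n)) (hρ : ∀ g, ρ g ∈ (AffineEquiv.toPerm (ZMod n)).range)

noncomputable def linearPartHom : G →* GL ι (ZMod n) :=
  GeneralLinearGroup.toLin.symm.toMonoidHom.comp <|
    (LinearMap.GeneralLinearGroup.generalLinearEquiv _ _).symm.toMonoidHom.comp <|
      AffineEquiv.linearHom.comp <|
        (MonoidHom.ofInjective AffineEquiv.toPerm_injective).symm.toMonoidHom.comp
          (ρ.codRestrict _ hρ)

theorem linearPartHom_apply (g : G) (i j : ι) :
    (linearPartHom ρ hρ g : Matrix ι ι (ZMod n)) i j = (ρ g (Pi.single j 1) - ρ g 0) i := by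
  obtain ⟨e, he⟩ := hρ g
  have hsymm : (MonoidHom.ofInjective AffineEquiv.toPerm_injective).symm ⟨ρ g, hρ g⟩ = e :=
    (MulEquiv.symm_apply_eq _).2 (Subtype.ext he.symm)
  simp only [linearPartHom, MonoidHom.comp_apply, MulEquiv.coe_toMonoidHom,
    MonoidHom.codRestrict_apply, hsymm]
  rw [← he]
  change LinearMap.toMatrix' (e.linear : (ι → ZMod n) →ₗ[ZMod n] ι → ZMod n) i j = _
  rw [LinearMap.toMatrix'_apply, LinearEquiv.coe_coe, AffineEquiv.linear_apply_eq_sub]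
  rfl

theorem linearPartHom_eq_one {g : G} (hg : ρ g = 1) : linearPartHom ρ hρ g = 1 := by
  ext i j
  simp [linearPartHom_apply, hg, Pi.single_apply, one_apply]

end LinearPart

namespace Matrix.SpecialLinearGroup

variable {n R : Type*} [Fintype n] [DecidableEq n] [CommRing R]

theorem toGL_bijective [Subsingleton Rˣ] :
    Function.Bijective (toGL : SpecialLinearGroup n R →* GL n R) := by
  refine ⟨toGL_injective, fun g ↦ ?_⟩
  rw [← Set.mem_range, range_toGL]
  exact Subsingleton.elim _ _

theorem center_eq_bot [Subsingleton Rˣ] : Subgroup.center (SpecialLinearGroup n R) = ⊥ := by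
  rcases isEmpty_or_nonempty n with _ | ⟨⟨i⟩⟩
  · exact Subgroup.eq_bot_of_subsingleton _
  · have := (center_equiv_rootsOfUnity' (R := R) i).toEquiv.subsingleton
    exact Subgroup.eq_bot_of_subsingleton _

noncomputable def pslEquivGL [Subsingleton Rˣ] : ProjectiveSpecialLinearGroup n R ≃* GL n R :=
  ((QuotientGroup.quotientMulEquivOfEq center_eq_bot).trans QuotientGroup.quotientBot).trans
    (MulEquiv.ofBijective _ toGL_bijective)

theorem card_mul_card_units [Nonempty n] [Finite R] :
    Nat.card (SpecialLinearGroup n R) * Nat.card Rˣ = Nat.card (GL n R) := by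
  have hker : Nat.card (SpecialLinearGroup n R) =
      Nat.card (GeneralLinearGroup.det (n := n) (R := R)).ker := by
    rw [← Nat.card_range_of_injective toGL_injective, range_toGL]
    rfl
  have hindex : (GeneralLinearGroup.det (n := n) (R := R)).ker.index = Nat.card Rˣ := by
    rw [Subgroup.index_ker, MonoidHom.range_eq_top.2 GeneralLinearGroup.det_surjective,
      Subgroup.card_top]
  rw [hker, ← hindex, Subgroup.card_mul_index]

end Matrix.SpecialLinearGroup

instance : Fact (Nat.Prime 7) := ⟨by norm_num⟩

/-- `∞ ↦ 0`, `0 ↦ e₁ + e₂ + e₄`, `q ↦ e_q` and `-q ↦ e_q + e_{2q}` for the quadratic residues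
`q ∈ {1, 2, 4}` (coordinates indexed by `1, 2, 4`): this makes `SL(2, 7)` act by affine maps. -/
def projLineSevenEquiv : OnePoint (ZMod 7) ≃ (Fin 3 → ZMod 2) where
  toFun x := x.elim 0 ![![1, 1, 1], ![1, 0, 0], ![0, 1, 0], ![1, 0, 1], ![0, 0, 1], ![0, 1, 1],
    ![1, 1, 0]]
  invFun v := ![![![∞, (4 : ZMod 7)], ![(2 : ZMod 7), (5 : ZMod 7)]],
    ![![(1 : ZMod 7), (3 : ZMod 7)], ![(6 : ZMod 7), (0 : ZMod 7)]]] (v 0) (v 1) (v 2)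
  left_inv := by
    rintro (_ | k)
    · rfl
    · fin_cases k <;> rfl
  right_inv := by unfold Function.RightInverse Function.LeftInverse; decide

/-- `x⁻¹` is written `x ^ 5` because inversion in `ZMod` does not reduce under `decide`. -/
def mobiusSeven (a b c d : ZMod 7) (x : OnePoint (ZMod 7)) : OnePoint (ZMod 7) :=
  x.elim (if c = 0 then ∞ else ↑(a * c ^ 5)) fun k ↦
    if c * k + d = 0 then ∞ else ↑((a * k + b) * (c * k + d) ^ 5)

theorem GL_smul_eq_mobiusSeven (g : GL (Fin 2) (ZMod 7)) (x : OnePoint (ZMod 7)) :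
    g • x = mobiusSeven (g 0 0) (g 0 1) (g 1 0) (g 1 1) x := by
  have inv_eq_pow_five (y : ZMod 7) : y⁻¹ = y ^ 5 := by
    rcases eq_or_ne y 0 with rfl | hy
    · simp
    · exact inv_eq_of_mul_eq_one_right (by revert y; decide)
  cases x <;> simp [mobiusSeven, smul_infty_eq_ite, smul_some_eq_ite, div_eq_mul_inv,
    inv_eq_pow_five]

noncomputable def slTwoSevenPerm : SL(2, ZMod 7) →* Equiv.Perm (Fin 3 → ZMod 2) :=
  projLineSevenEquiv.permCongrHom.toMonoidHom.comp
    ((MulAction.toPermHom (GL (Fin 2) (ZMod 7)) (OnePoint (ZMod 7))).comp SpecialLinearGroup.toGL)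

theorem slTwoSevenPerm_apply (g : SL(2, ZMod 7)) (v : Fin 3 → ZMod 2) :
    slTwoSevenPerm g v = projLineSevenEquiv
      (mobiusSeven (g 0 0) (g 0 1) (g 1 0) (g 1 1) (projLineSevenEquiv.symm v)) := by
  simp [slTwoSevenPerm, Equiv.permCongr_apply, GL_smul_eq_mobiusSeven]

theorem slTwoSevenPerm_mem_range (g : SL(2, ZMod 7)) :
    slTwoSevenPerm g ∈ (AffineEquiv.toPerm (ZMod 2)).range := by
  refine SL2.transvection_induction (fun g ↦ slTwoSevenPerm g ∈ _) (fun i j h c ↦ ?_)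
    (fun A B hA hB ↦ by rw [map_mul]; exact mul_mem hA hB) g
  refine AffineEquiv.mem_range_toPerm_of_map_add _ fun u v ↦ ?_
  simp only [slTwoSevenPerm_apply, SpecialLinearGroup.transvection_coe]
  fin_cases i <;> fin_cases j <;> revert h c u v <;> decide

theorem slTwoSevenPerm_eq_one_of_mem_center {g : SL(2, ZMod 7)} (hg : g ∈ Subgroup.center _) :
    slTwoSevenPerm g = 1 := by
  obtain ⟨r, hr, hg⟩ := Matrix.SpecialLinearGroup.mem_center_iff.1 hg
  ext v : 1
  simp only [slTwoSevenPerm_apply, ← hg]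
  clear hg
  revert r v
  decide

noncomputable def slTwoSevenToGL : SL(2, ZMod 7) →* GL (Fin 3) (ZMod 2) :=
  linearPartHom slTwoSevenPerm slTwoSevenPerm_mem_range

noncomputable def pslTwoSevenToGL : PSL(2, ZMod 7) →* GL (Fin 3) (ZMod 2) :=
  QuotientGroup.lift _ slTwoSevenToGL fun _ hg ↦
    linearPartHom_eq_one _ _ (slTwoSevenPerm_eq_one_of_mem_center hg)

theorem slTwoSevenToGL_transvection_ne_one :
    slTwoSevenToGL (SpecialLinearGroup.transvection zero_ne_one 1) ≠ 1 := by
  intro h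
  have := congrArg (fun M : GL (Fin 3) (ZMod 2) ↦ (M : Matrix (Fin 3) (Fin 3) (ZMod 2)) 0 0) h
  simp only [slTwoSevenToGL, linearPartHom_apply, slTwoSevenPerm_apply,
    SpecialLinearGroup.transvection_coe, Units.val_one] at this
  revert this
  decide

theorem pslTwoSevenToGL_injective : Function.Injective pslTwoSevenToGL := by
  have : IsSimpleGroup PSL(2, ZMod 7) := ProjectiveSpecialLinearGroup.rank_two_simple (by simp)
  refine (MonoidHom.ker_eq_bot_iff _).1 <|
    (MonoidHom.normal_ker _).eq_bot_or_eq_top.resolve_right fun h ↦ ?_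
  exact slTwoSevenToGL_transvection_ne_one <|
    eq_top_iff.1 h (Subgroup.mem_top (QuotientGroup.mk (SpecialLinearGroup.transvection _ _)))

theorem card_GL_three_two : Nat.card (GL (Fin 3) (ZMod 2)) = 168 := by
  rw [card_GL_field]
  simp [Fin.prod_univ_three]

theorem le_card_PSL_two_seven : 168 ≤ Nat.card PSL(2, ZMod 7) := by
  have hSL : Nat.card SL(2, ZMod 7) * 6 = 48 * 42 := by
    have hunits : Nat.card (ZMod 7)ˣ = 6 := by rw [Nat.card_eq_fintype_card, ZMod.card_units]
    rw [← hunits, SpecialLinearGroup.card_mul_card_units, card_GL_field]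
    simp [Fin.prod_univ_two]
  have hcenter : Nat.card (Subgroup.center SL(2, ZMod 7)) ≤ 2 := by
    rw [Nat.card_congr (SpecialLinearGroup.center_equiv_rootsOfUnity' 0).toEquiv]
    exact card_rootsOfUnity _ _
  have := (Subgroup.center SL(2, ZMod 7)).card_eq_card_quotient_mul_card_subgroup
  nlinarith

theorem pslTwoSevenToGL_bijective : Function.Bijective pslTwoSevenToGL :=
  pslTwoSevenToGL_injective.bijective_of_nat_card_le (card_GL_three_two ▸ le_card_PSL_two_seven)

/-- The groups `PSL(3,F₂)` and `PSL(2,F₇)` are isomorphic. -/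
theorem psl_three_two_iso_psl_two_seven :
    Nonempty (PSL(3, ZMod 2) ≃* PSL(2, ZMod 7)) :=
  ⟨SpecialLinearGroup.pslEquivGL.trans (MulEquiv.ofBijective _ pslTwoSevenToGL_bijective).symm⟩
end

section
/- There are exactly 16 coherent orientations of the Fano plane, i.e., exactly 16 choices of a cyclic orientation of each of the 7 lines such that the induced sign constants θ_{α,β} = ±1 satisfy the triangle relations θ_{α,β} θ_{α+β,γ} = θ_{β,γ} θ_{β+γ,α} = θ_{γ,α} θ_{γ+α,β} for all triangles (α,β,γ). -/
/-!
Let `refOrientation` run through each line in increasing order of the binary labels of its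
points. Any orientation differs from it by one sign per line, and the line
through `α` and `β` is determined by its normal vector `α ⨯₃ β`, because the points of the line
are exactly the nonzero vectors orthogonal to it. So orientations correspond to sign functions
on the seven nonzero normal vectors, and the coherent ones among these `2⁷` are counted by
exhaustive computation.
-/

open Matrix

set_option synthInstance.maxSize 1000

namespace Fano

abbrev Point : Type := Fin 3 → ZMod 2

structure IsOrientation (θ : Point → Point → ℤ) : Prop where
  eq_zero : ∀ α β, (α = 0 ∨ β = 0 ∨ α = β) → θ α β = 0
  eq_one_or_eq_neg_one : ∀ α β, α ≠ 0 → β ≠ 0 → α ≠ β → θ α β = 1 ∨ θ α β = -1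
  swap : ∀ α β, α ≠ 0 → β ≠ 0 → α ≠ β → θ β α = -θ α β
  rotate : ∀ α β, α ≠ 0 → β ≠ 0 → α ≠ β → θ α β = θ β (α + β)

def IsCoherent (θ : Point → Point → ℤ) : Prop :=
  ∀ α β γ, α ≠ 0 → β ≠ 0 → γ ≠ 0 → α ≠ β → β ≠ γ → α ≠ γ → γ ≠ α + β →
    θ α β * θ (α + β) γ = θ β γ * θ (β + γ) α ∧
    θ β γ * θ (β + γ) α = θ γ α * θ (γ + α) β

instance : DecidablePred IsCoherent := fun θ => by unfold IsCoherent; infer_instance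

theorem cross_comm (α β : Point) : β ⨯₃ α = α ⨯₃ β := by
  rw [← cross_anticomm, CharTwo.neg_eq]

theorem cross_add_self_right (α β : Point) : β ⨯₃ (α + β) = α ⨯₃ β := by
  rw [map_add, cross_self, add_zero, cross_comm]

theorem cross_ne_zero : ∀ α β : Point, α ≠ 0 → β ≠ 0 → α ≠ β → α ⨯₃ β ≠ 0 := by decide

theorem eq_of_dotProduct_cross_eq_zero : ∀ α β x : Point, α ≠ 0 → β ≠ 0 → α ≠ β →
    x ⬝ᵥ α ⨯₃ β = 0 → x = 0 ∨ x = α ∨ x = β ∨ x = α + β := by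
  decide

/-- `γ ⨯₃ δ = α ⨯₃ β` puts `γ` and `δ` on the line through `α` and `β`, and the moves
`(α, β) ↦ (β, α)` and `(α, β) ↦ (β, α + β)` generate all permutations of a line. -/
theorem apply_eq_of_cross_eq {X : Type*} (f : Point → Point → X)
    (swap : ∀ α β, α ≠ 0 → β ≠ 0 → α ≠ β → f β α = f α β)
    (rotate : ∀ α β, α ≠ 0 → β ≠ 0 → α ≠ β → f β (α + β) = f α β)
    {α β γ δ : Point} (hα : α ≠ 0) (hβ : β ≠ 0) (hαβ : α ≠ β)
    (hγ : γ ≠ 0) (hδ : δ ≠ 0) (hγδ : γ ≠ δ) (h : γ ⨯₃ δ = α ⨯₃ β) : f γ δ = f α β := by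
  have hγ' := eq_of_dotProduct_cross_eq_zero α β γ hα hβ hαβ (h ▸ dot_self_cross γ δ)
  have hδ' := eq_of_dotProduct_cross_eq_zero α β δ hα hβ hαβ (h ▸ dot_cross_self γ δ)
  have hs : α + β ≠ 0 := by rwa [Ne, add_eq_zero_iff_eq_neg, CharTwo.neg_eq]
  have hαs : α ≠ α + β := fun e => hβ (by simpa using e.symm)
  have hβs : β ≠ α + β := fun e => hα (by simpa using e.symm)
  have third : f (α + β) α = f α β := by
    have hcancel : β + (α + β) = α := by rw [add_comm α, CharTwo.add_cancel_left]
    have e := rotate β (α + β) hβ hs hβs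
    rwa [hcancel, rotate α β hα hβ hαβ] at e
  rcases hγ' with rfl | rfl | rfl | rfl <;> rcases hδ' with rfl | rfl | rfl | rfl <;>
    first
    | contradiction
    | rfl
    | exact swap _ _ hα hβ hαβ
    | exact rotate _ _ hα hβ hαβ
    | exact third
    | rw [swap _ _ hβ hs hβs, rotate _ _ hα hβ hαβ]
    | rw [swap _ _ hs hα hαs.symm, third]

namespace IsOrientation

variable {θ θ' : Point → Point → ℤ}

theorem mul_cross (hθ : IsOrientation θ) (τ : Point → ℤˣ) :
    IsOrientation fun α β => θ α β * τ (α ⨯₃ β) where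
  eq_zero α β h := by simp only [hθ.eq_zero α β h, zero_mul]
  eq_one_or_eq_neg_one α β hα hβ hαβ := by
    rcases hθ.eq_one_or_eq_neg_one α β hα hβ hαβ with h | h <;>
      rcases Int.units_eq_one_or (τ (α ⨯₃ β)) with e | e <;> simp [h, e]
  swap α β hα hβ hαβ := by simp only [cross_comm, hθ.swap α β hα hβ hαβ, neg_mul]
  rotate α β hα hβ hαβ := by simp only [cross_add_self_right, hθ.rotate α β hα hβ hαβ]

theorem mul_eq_mul_of_cross_eq (hθ : IsOrientation θ) (hθ' : IsOrientation θ')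
    {α β γ δ : Point} (hα : α ≠ 0) (hβ : β ≠ 0) (hαβ : α ≠ β)
    (hγ : γ ≠ 0) (hδ : δ ≠ 0) (hγδ : γ ≠ δ) (h : γ ⨯₃ δ = α ⨯₃ β) :
    θ γ δ * θ' γ δ = θ α β * θ' α β :=
  apply_eq_of_cross_eq (fun α β => θ α β * θ' α β)
    (fun α β hα hβ hαβ => by
      simp only [hθ.swap α β hα hβ hαβ, hθ'.swap α β hα hβ hαβ, neg_mul_neg])
    (fun α β hα hβ hαβ => by
      simp only [← hθ.rotate α β hα hβ hαβ, ← hθ'.rotate α β hα hβ hαβ])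
    hα hβ hαβ hγ hδ hγδ h

end IsOrientation

/-- Binary expansion; this typechecks because `ZMod 2` is `Fin 2` by definition. -/
def label : Point ≃ Fin 8 := finFunctionFinEquiv

def refOrientation (α β : Point) : ℤ :=
  if α = 0 ∨ β = 0 ∨ α = β then 0
  else
    let a := label α; let b := label β; let c := label (α + β)
    if a < b ∧ b < c ∨ b < c ∧ c < a ∨ c < a ∧ a < b then 1 else -1

theorem isOrientation_refOrientation : IsOrientation refOrientation :=
  ⟨by decide, by decide, by decide, by decide⟩

/-- `σ i` is the sign on the line whose normal vector has label `i`; `σ 0` is never used. -/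
def twist (σ : Fin 8 → ℤˣ) (α β : Point) : ℤ := refOrientation α β * σ (label (α ⨯₃ β))

theorem isOrientation_twist (σ : Fin 8 → ℤˣ) : IsOrientation (twist σ) :=
  isOrientation_refOrientation.mul_cross (σ ∘ label)

theorem label_zero : label 0 = 0 := by decide

theorem exists_label_cross_eq : ∀ i : Fin 8, i ≠ 0 →
    ∃ α β : Point, α ≠ 0 ∧ β ≠ 0 ∧ α ≠ β ∧ label (α ⨯₃ β) = i := by
  decide

theorem twist_injOn : Set.InjOn twist {σ | σ 0 = 1} := by
  intro σ hσ τ hτ h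
  funext i
  by_cases hi : i = 0
  · rw [hi, show σ 0 = 1 from hσ, show τ 0 = 1 from hτ]
  obtain ⟨α, β, hα, hβ, hαβ, rfl⟩ := exists_label_cross_eq i hi
  have hne : refOrientation α β ≠ 0 := by
    rcases isOrientation_refOrientation.eq_one_or_eq_neg_one α β hα hβ hαβ with h | h <;> simp [h]
  exact Units.val_injective (mul_left_cancel₀ hne (congrFun₂ h α β))

def lineSign (θ : Point → Point → ℤ) (i : Fin 8) : ℤˣ :=
  if ∃ α β, α ≠ 0 ∧ β ≠ 0 ∧ α ≠ β ∧ label (α ⨯₃ β) = i ∧ θ α β ≠ refOrientation α β then -1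
  else 1

theorem lineSign_zero (θ : Point → Point → ℤ) : lineSign θ 0 = 1 := by
  refine if_neg ?_
  rintro ⟨α, β, hα, hβ, hαβ, h, -⟩
  exact cross_ne_zero α β hα hβ hαβ (label.injective (h.trans label_zero.symm))

theorem IsOrientation.eq_twist_lineSign {θ : Point → Point → ℤ} (hθ : IsOrientation θ) :
    θ = twist (lineSign θ) := by
  funext α β
  by_cases hdeg : α = 0 ∨ β = 0 ∨ α = β
  · rw [hθ.eq_zero α β hdeg, (isOrientation_twist _).eq_zero α β hdeg]
  obtain ⟨hα, hβ, hαβ⟩ : α ≠ 0 ∧ β ≠ 0 ∧ α ≠ β := by tauto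
  unfold twist lineSign
  split_ifs with hw
  · obtain ⟨γ, δ, hγ, hδ, hγδ, hline, hne⟩ := hw
    have hratio := hθ.mul_eq_mul_of_cross_eq isOrientation_refOrientation hα hβ hαβ hγ hδ hγδ
      (label.injective hline)
    rcases hθ.eq_one_or_eq_neg_one α β hα hβ hαβ with h1 | h1 <;>
      rcases hθ.eq_one_or_eq_neg_one γ δ hγ hδ hγδ with h2 | h2 <;>
      rcases isOrientation_refOrientation.eq_one_or_eq_neg_one α β hα hβ hαβ with h3 | h3 <;>
      rcases isOrientation_refOrientation.eq_one_or_eq_neg_one γ δ hγ hδ hγδ with h4 | h4 <;>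
      simp_all
  · push Not at hw
    simpa using hw α β hα hβ hαβ rfl

set_option maxHeartbeats 4000000 in
theorem card_filter_isCoherent_twist :
    (Finset.univ.filter fun σ : Fin 8 → ℤˣ => σ 0 = 1 ∧ IsCoherent (twist σ)).card = 16 := by
  decide

theorem ncard_setOf_isOrientation_isCoherent :
    {θ | IsOrientation θ ∧ IsCoherent θ}.ncard = 16 := by
  have himage : {θ | IsOrientation θ ∧ IsCoherent θ} =
      twist '' {σ | σ 0 = 1 ∧ IsCoherent (twist σ)} := by
    ext θ
    constructor
    · rintro ⟨hθ, hcoh⟩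
      exact ⟨lineSign θ, ⟨lineSign_zero θ, hθ.eq_twist_lineSign ▸ hcoh⟩,
        hθ.eq_twist_lineSign.symm⟩
    · rintro ⟨σ, ⟨-, hσ⟩, rfl⟩
      exact ⟨isOrientation_twist σ, hσ⟩
  rw [himage, (twist_injOn.mono fun σ hσ => hσ.1).ncard_image,
    ← card_filter_isCoherent_twist, ← Set.ncard_coe_finset]
  simp only [Finset.coe_filter, Finset.mem_univ, true_and]

end Fano

/-- There are exactly 16 coherent orientations of the Fano plane.  Points of the Fano
plane are the nonzero vectors of `F₂³`; lines are the triples `{α, β, α+β}`.  A choice of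
a cyclic orientation of every line is encoded by sign constants `θ_{α,β} = ±1` defined
for distinct nonzero `α, β` (with `θ_{α,β} = 1` iff `β` follows `α` in the orientation of
the line through `α` and `β`), so that `θ_{β,α} = -θ_{α,β}` and `θ` is constant along the
cyclic order of each line (`θ_{α,β} = θ_{β,α+β}`); we normalize `θ` to be `0` on all
other pairs.  The orientation is coherent when the triangle relations
`θ_{α,β} θ_{α+β,γ} = θ_{β,γ} θ_{β+γ,α} = θ_{γ,α} θ_{γ+α,β}` hold for every triangle
`(α, β, γ)`.  Exactly 16 of the `2⁷` orientations are coherent. -/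
theorem coherent_orientations_of_fano_plane_card :
    {θ : (Fin 3 → ZMod 2) → (Fin 3 → ZMod 2) → ℤ |
      (∀ α β, (α = 0 ∨ β = 0 ∨ α = β) → θ α β = 0) ∧
      (∀ α β, α ≠ 0 → β ≠ 0 → α ≠ β → θ α β = 1 ∨ θ α β = -1) ∧
      (∀ α β, α ≠ 0 → β ≠ 0 → α ≠ β → θ β α = -θ α β) ∧
      (∀ α β, α ≠ 0 → β ≠ 0 → α ≠ β → θ α β = θ β (α + β)) ∧
      (∀ α β γ, α ≠ 0 → β ≠ 0 → γ ≠ 0 → α ≠ β → β ≠ γ → α ≠ γ → γ ≠ α + β →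
        θ α β * θ (α + β) γ = θ β γ * θ (β + γ) α ∧
        θ β γ * θ (β + γ) α = θ γ α * θ (γ + α) β)}.ncard = 16 := by
  rw [← Fano.ncard_setOf_isOrientation_isCoherent]
  congr 1
  ext θ
  exact ⟨fun ⟨h₁, h₂, h₃, h₄, h₅⟩ => ⟨⟨h₁, h₂, h₃, h₄⟩, h₅⟩,
    fun ⟨⟨h₁, h₂, h₃, h₄⟩, h₅⟩ => ⟨h₁, h₂, h₃, h₄, h₅⟩⟩
end
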